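/- arXiv:2011.07983 — 3 statements merged into one kernel-verified Lean document; each statement's English description precedes it below -/
import Mathlib

section
/- Every nonzero homogeneous (with respect to total degree) polynomial lying in the intersection J_{C3} ∩ J_{K13} has total degree at least 4. Equivalently, the ideal J_{C3} ∩ J_{K13} is generated in degrees at least four. -/
/-! A monomial of an element of `J_{C3}` is divisible by `x_i x_j` or `y_i y_j` for an edge `ij` of
the triangle, and a monomial of an element of `J_{K13}` is divisible both by `y₂` or some `x₂ x_l`,
and by `x₂` or some `y₂ y_l`. In degree at most three this leaves only `x₂ x_i x_j` and `y₂ y_i y_j`.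
In an element of `J_{C3}` the coefficients of `x₂ x_i x_j` and `x₂ y_i y_j` are opposite, since
`x_i x_j - y_i y_j` is the only generator dividing either monomial, and `x₂ y_i y_j` cannot occur
in an element of `J_{K13}`; symmetrically for `y₂ y_i y_j`. -/

/- Variables: the polynomial ring K[x1,x2,x3,x4,y1,y2,y3,y4] is modelled as
`MvPolynomial (Fin 4 ⊕ Fin 4) K`, where `x (k-1) = X (Sum.inl (k-1))` stands for x_k and
`y (k-1) = X (Sum.inr (k-1))` stands for y_k. -/

open MvPolynomial

noncomputable section

variable (K : Type*) [Field K]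

/-- x_(i+1) -/
noncomputable def x (i : Fin 4) : MvPolynomial (Fin 4 ⊕ Fin 4) K := X (Sum.inl i)

/-- y_(i+1) -/
noncomputable def y (i : Fin 4) : MvPolynomial (Fin 4 ⊕ Fin 4) K := X (Sum.inr i)

/-- The parity binomial edge ideal of the triangle on vertices {1,3,4}. -/
noncomputable def JC3 : Ideal (MvPolynomial (Fin 4 ⊕ Fin 4) K) :=
  Ideal.span {x K 0 * x K 2 - y K 0 * y K 2,
              x K 0 * x K 3 - y K 0 * y K 3,
              x K 2 * x K 3 - y K 2 * y K 3}

/-- The parity binomial edge ideal of the star with center 2 and leaves 1,3,4. -/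
noncomputable def JK13 : Ideal (MvPolynomial (Fin 4 ⊕ Fin 4) K) :=
  Ideal.span {x K 0 * x K 1 - y K 0 * y K 1,
              x K 1 * x K 2 - y K 1 * y K 2,
              x K 1 * x K 3 - y K 1 * y K 3}

section Monomials

variable {σ R : Type*} [CommSemiring R]

theorem Finsupp.eq_single_one_of_degree_le_one {u : σ →₀ ℕ} (hu : u.degree ≤ 1) {v : σ}
    (hv : u v ≠ 0) : u = Finsupp.single v 1 := by
  have h1 : u.degree = 1 :=
    le_antisymm hu ((Nat.one_le_iff_ne_zero.2 hv).trans (Finsupp.le_degree v u))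
  obtain ⟨a, rfl⟩ : u ∈ Set.range (Finsupp.single · 1) := by
    rw [Finsupp.range_single_one]; exact h1
  rw [(Finsupp.single_apply_ne_zero.1 hv).1]

theorem Finsupp.single_add_single_le_iff {a b : σ} (h : a ≠ b) {m : σ →₀ ℕ} :
    Finsupp.single a 1 + Finsupp.single b 1 ≤ m ↔ 1 ≤ m a ∧ 1 ≤ m b := by
  refine ⟨fun H => ⟨by simpa [h] using H a, by simpa [h.symm] using H b⟩, fun ⟨ha, hb⟩ c => ?_⟩
  classical
  simp only [Finsupp.add_apply, Finsupp.single_apply]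
  split_ifs <;> subst_vars <;> simp_all

theorem MvPolynomial.X_mul_X_eq_monomial (i j : σ) :
    (X i * X j : MvPolynomial σ R) = monomial (Finsupp.single i 1 + Finsupp.single j 1) 1 := by
  rw [X, X, monomial_mul, one_mul]

theorem MvPolynomial.monomial_mem_span_monomial_image {S : Set (σ →₀ ℕ)} {s a : σ →₀ ℕ}
    (hs : s ∈ S) (h : s ≤ a) :
    monomial a (1 : R) ∈ Ideal.span ((fun s => monomial s (1 : R)) '' S) := by
  have : monomial a (1 : R) = monomial (a - s) 1 * monomial s 1 := by
    rw [monomial_mul, mul_one, tsub_add_cancel_of_le h]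
  rw [this]
  exact Ideal.mul_mem_left _ _ (Ideal.subset_span ⟨s, hs, rfl⟩)

end Monomials

def xx (i j : Fin 4) : Fin 4 ⊕ Fin 4 →₀ ℕ :=
  Finsupp.single (.inl i) 1 + Finsupp.single (.inl j) 1

def yy (i j : Fin 4) : Fin 4 ⊕ Fin 4 →₀ ℕ :=
  Finsupp.single (.inr i) 1 + Finsupp.single (.inr j) 1

theorem x_mul_x (i j : Fin 4) : x K i * x K j = monomial (xx i j) 1 :=
  X_mul_X_eq_monomial _ _

theorem y_mul_y (i j : Fin 4) : y K i * y K j = monomial (yy i j) 1 :=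
  X_mul_X_eq_monomial _ _

/-- The edges of the triangle on `{1, 3, 4}`, shifted to `{0, 2, 3}` and listed once each; index `1`
is the centre `2` of the star. -/
abbrev IsTriangleEdge (i j : Fin 4) : Prop := i ≠ 1 ∧ j ≠ 1 ∧ i < j

section Coefficients

variable {K} {f : MvPolynomial (Fin 4 ⊕ Fin 4) K} {m : Fin 4 ⊕ Fin 4 →₀ ℕ}

theorem exists_isTriangleEdge_of_mem_support_JC3 (hf : f ∈ JC3 K) (hm : m ∈ f.support) :
    ∃ i j, IsTriangleEdge i j ∧ (xx i j ≤ m ∨ yy i j ≤ m) := by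
  let S := {s | ∃ i j, IsTriangleEdge i j ∧ (s = xx i j ∨ s = yy i j)}
  have hS : JC3 K ≤ Ideal.span ((fun s => monomial s 1) '' S) := by
    rw [JC3, Ideal.span_le]
    rintro _ (rfl | rfl | rfl) <;> simp only [x_mul_x, y_mul_y] <;>
      exact Ideal.sub_mem _ (Ideal.subset_span ⟨_, ⟨_, _, by decide, Or.inl rfl⟩, rfl⟩)
        (Ideal.subset_span ⟨_, ⟨_, _, by decide, Or.inr rfl⟩, rfl⟩)
  obtain ⟨s, ⟨i, j, hij, rfl | rfl⟩, hs⟩ := mem_ideal_span_monomial_image.1 (hS hf) m hm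
  · exact ⟨i, j, hij, Or.inl hs⟩
  · exact ⟨i, j, hij, Or.inr hs⟩

theorem center_y_or_x_edge_of_mem_support_JK13 (hf : f ∈ JK13 K) (hm : m ∈ f.support) :
    m (.inr 1) ≠ 0 ∨ m (.inl 1) ≠ 0 ∧ ∃ l ≠ 1, m (.inl l) ≠ 0 := by
  let S : Set (Fin 4 ⊕ Fin 4 →₀ ℕ) := {Finsupp.single (.inr 1) 1, xx 0 1, xx 1 2, xx 1 3}
  have hS : JK13 K ≤ Ideal.span ((fun s => monomial s 1) '' S) := by
    rw [JK13, Ideal.span_le]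
    rintro _ (rfl | rfl | rfl) <;> simp only [x_mul_x, y_mul_y] <;>
      exact Ideal.sub_mem _ (Ideal.subset_span ⟨_, by simp [S], rfl⟩)
        (monomial_mem_span_monomial_image (Set.mem_insert _ _) (by simp [yy]))
  obtain ⟨s, hs, hsm⟩ := mem_ideal_span_monomial_image.1 (hS hf) m hm
  simp only [S, Set.mem_insert_iff, Set.mem_singleton_iff] at hs
  rcases hs with rfl | rfl | rfl | rfl <;>
    simp [xx, Finsupp.le_def, Sum.forall, Fin.forall_fin_succ, Finsupp.single_apply] at hsm <;>
    simp [Fin.exists_fin_succ] <;> omega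

theorem center_x_or_y_edge_of_mem_support_JK13 (hf : f ∈ JK13 K) (hm : m ∈ f.support) :
    m (.inl 1) ≠ 0 ∨ m (.inr 1) ≠ 0 ∧ ∃ l ≠ 1, m (.inr l) ≠ 0 := by
  let S : Set (Fin 4 ⊕ Fin 4 →₀ ℕ) := {Finsupp.single (.inl 1) 1, yy 0 1, yy 1 2, yy 1 3}
  have hS : JK13 K ≤ Ideal.span ((fun s => monomial s 1) '' S) := by
    rw [JK13, Ideal.span_le]
    rintro _ (rfl | rfl | rfl) <;> simp only [x_mul_x, y_mul_y] <;>
      exact Ideal.sub_mem _ (monomial_mem_span_monomial_image (Set.mem_insert _ _) (by simp [xx]))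
        (Ideal.subset_span ⟨_, by simp [S], rfl⟩)
  obtain ⟨s, hs, hsm⟩ := mem_ideal_span_monomial_image.1 (hS hf) m hm
  simp only [S, Set.mem_insert_iff, Set.mem_singleton_iff] at hs
  rcases hs with rfl | rfl | rfl | rfl <;>
    simp [yy, Finsupp.le_def, Sum.forall, Fin.forall_fin_succ, Finsupp.single_apply] at hsm <;>
    simp [Fin.exists_fin_succ] <;> omega

theorem coeff_add_xx_eq_neg_coeff_add_yy (hf : f ∈ JC3 K) {u : Fin 4 ⊕ Fin 4 →₀ ℕ}
    (hu : ∀ l ≠ 1, u (.inl l) = 0 ∧ u (.inr l) = 0) {i j : Fin 4} (hij : IsTriangleEdge i j) :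
    coeff (u + xx i j) f = -coeff (u + yy i j) f := by
  rw [JC3] at hf
  obtain ⟨c₁, c₂, c₃, rfl⟩ := Submodule.mem_span_triple.1 hf
  have h0 := hu 0 (by decide)
  have h2 := hu 2 (by decide)
  have h3 := hu 3 (by decide)
  obtain ⟨hi, hj, hlt⟩ := hij
  simp only [x_mul_x, y_mul_y, smul_eq_mul, mul_sub, coeff_add, coeff_sub, coeff_mul_monomial']
  fin_cases i <;> fin_cases j <;> simp at hi hj hlt <;> simp only [xx, yy] <;>
    simp (disch := decide) only [Finsupp.single_add_single_le_iff] <;> simp [h0, h2, h3]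

theorem coeff_x_add_xx_eq_zero (hf : f ∈ JC3 K ⊓ JK13 K) {i j : Fin 4} (hij : IsTriangleEdge i j) :
    coeff (Finsupp.single (.inl 1) 1 + xx i j) f = 0 := by
  rw [coeff_add_xx_eq_neg_coeff_add_yy hf.1 (fun l hl => by simp [Ne.symm hl]) hij, neg_eq_zero]
  by_contra h
  rcases center_y_or_x_edge_of_mem_support_JK13 hf.2 (mem_support_iff.2 h) with h | ⟨-, l, hl, h⟩
  · simp [yy, hij.1.symm, hij.2.1.symm] at h
  · simp [yy, hl.symm] at h

theorem coeff_y_add_yy_eq_zero (hf : f ∈ JC3 K ⊓ JK13 K) {i j : Fin 4} (hij : IsTriangleEdge i j) :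
    coeff (Finsupp.single (.inr 1) 1 + yy i j) f = 0 := by
  rw [← neg_eq_zero,
    ← coeff_add_xx_eq_neg_coeff_add_yy hf.1 (fun l hl => by simp [Ne.symm hl]) hij]
  by_contra h
  rcases center_x_or_y_edge_of_mem_support_JK13 hf.2 (mem_support_iff.2 h) with h | ⟨-, l, hl, h⟩
  · simp [xx, hij.1.symm, hij.2.1.symm] at h
  · simp [xx, hl.symm] at h

theorem coeff_eq_zero_of_xx_le (hf : f ∈ JC3 K ⊓ JK13 K) {i j : Fin 4} (hij : IsTriangleEdge i j)
    (hle : xx i j ≤ m) (hm : m.degree ≤ 3) : coeff m f = 0 := by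
  obtain ⟨u, rfl⟩ := exists_add_of_le hle
  have hu : u.degree ≤ 1 := by simp [xx] at hm; omega
  by_contra h
  rcases center_x_or_y_edge_of_mem_support_JK13 hf.2 (mem_support_iff.2 h) with
    hx | ⟨hy, l, hl, hyl⟩
  · rw [Finsupp.eq_single_one_of_degree_le_one hu
      (by simpa [xx, Finsupp.single_apply, hij.1.symm, hij.2.1.symm] using hx), add_comm] at h
    exact h (coeff_x_add_xx_eq_zero hf hij)
  · rw [Finsupp.eq_single_one_of_degree_le_one hu (by simpa [xx] using hy)] at hyl
    simp [xx, hl.symm] at hyl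

theorem coeff_eq_zero_of_yy_le (hf : f ∈ JC3 K ⊓ JK13 K) {i j : Fin 4} (hij : IsTriangleEdge i j)
    (hle : yy i j ≤ m) (hm : m.degree ≤ 3) : coeff m f = 0 := by
  obtain ⟨u, rfl⟩ := exists_add_of_le hle
  have hu : u.degree ≤ 1 := by simp [yy] at hm; omega
  by_contra h
  rcases center_y_or_x_edge_of_mem_support_JK13 hf.2 (mem_support_iff.2 h) with
    hy | ⟨hx, l, hl, hxl⟩
  · rw [Finsupp.eq_single_one_of_degree_le_one hu
      (by simpa [yy, Finsupp.single_apply, hij.1.symm, hij.2.1.symm] using hy), add_comm] at h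
    exact h (coeff_y_add_yy_eq_zero hf hij)
  · rw [Finsupp.eq_single_one_of_degree_le_one hu (by simpa [yy] using hx)] at hxl
    simp [yy, hl.symm] at hxl

theorem coeff_eq_zero_of_degree_le_three (hf : f ∈ JC3 K ⊓ JK13 K) (hm : m.degree ≤ 3) :
    coeff m f = 0 := by
  by_contra h
  obtain ⟨i, j, hij, hx | hy⟩ := exists_isTriangleEdge_of_mem_support_JC3 hf.1 (mem_support_iff.2 h)
  · exact h (coeff_eq_zero_of_xx_le hf hij hx hm)
  · exact h (coeff_eq_zero_of_yy_le hf hij hy hm)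

end Coefficients

/-- Every nonzero homogeneous polynomial in J_{C3} ∩ J_{K13} has total degree at least 4. -/
theorem JC3_inter_JK13_generated_in_degree_ge_four
    (f : MvPolynomial (Fin 4 ⊕ Fin 4) K) (d : ℕ)
    (hf : f ∈ JC3 K ⊓ JK13 K) (hhom : f.IsHomogeneous d) (hne : f ≠ 0) :
    4 ≤ d := by
  obtain ⟨m, hm⟩ := exists_coeff_ne_zero hne
  have hdeg : m.degree = d := by_contra fun h => hm (hhom.coeff_eq_zero h)
  by_contra! hd
  exact hm (coeff_eq_zero_of_degree_le_three hf (by omega))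

end
end

section
/- Every polynomial in J_{C3} that is a K-linear combination of the eight monomials u1·u2·u3, where each ui ∈ {xi, yi} for i = 1,2,3 (i.e., every element of J_{C3} that is multihomogeneous of multidegree (1,1,1,0) with respect to the grading deg(xi) = deg(yi) = ei), is a K-linear combination of the two polynomials x1x2x3 − y1x2y3 and x1y2x3 − y1y2y3. -/
/- Variables: the polynomial ring K[x1,x2,x3,x4,y1,y2,y3,y4] is modelled as
`MvPolynomial (Fin 4 ⊕ Fin 4) K`, where `x (k-1) = X (Sum.inl (k-1))` stands for x_k and
`y (k-1) = X (Sum.inr (k-1))` stands for y_k. -/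

open MvPolynomial

noncomputable section

variable (K : Type*) [Field K]

/-- The eight monomials u1·u2·u3 with u_i ∈ {x_i, y_i} for i = 1,2,3, i.e. the monomial
basis of the space of multihomogeneous polynomials of multidegree (1,1,1,0). -/
def multidegOneOneOneMonomials : Set (MvPolynomial (Fin 4 ⊕ Fin 4) K) :=
  {m | ∃ u : Fin 3 → Bool,
    m = ∏ i : Fin 3, (if u i then x K i.castSucc else y K i.castSucc)}

/-! ### Auxiliary machinery -/

/-- The substitution homomorphism x1 ↦ pq, x3 ↦ rs, y1 ↦ ps, y3 ↦ rq, x2 ↦ a, y2 ↦ b,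
x4, y4 ↦ 0, where p,q,r,s,a,b are the six variables of the target ring.  It kills JC3. -/
noncomputable def phi : MvPolynomial (Fin 4 ⊕ Fin 4) K →ₐ[K] MvPolynomial (Fin 6) K :=
  aeval (Sum.elim ![X 0 * X 1, X 4, X 2 * X 3, 0] ![X 0 * X 3, X 5, X 2 * X 1, 0])

/-- The monomial of multidegree (1,1,1,0) associated to a choice u of x's and y's. -/
def g (u : Fin 3 → Bool) : MvPolynomial (Fin 4 ⊕ Fin 4) K :=
  ∏ i : Fin 3, (if u i then x K i.castSucc else y K i.castSucc)

/-- Exponent vectors for the target ring. -/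
def ee (v : Fin 6 → ℕ) : Fin 6 →₀ ℕ := Finsupp.equivFunOnFinite.symm v

lemma ee_inj {v w : Fin 6 → ℕ} : ee v = ee w ↔ v = w :=
  Finsupp.equivFunOnFinite.symm.injective.eq_iff

lemma prod5' (a b c d e : Fin 6) (v : Fin 6 → ℕ)
    (hv : ((Finsupp.single a 1 + Finsupp.single b 1) + Finsupp.single c 1)
      + (Finsupp.single d 1 + Finsupp.single e 1) = ee v) :
    (X a * X b * X c) * (X d * X e) = (monomial (ee v) 1 : MvPolynomial (Fin 6) K) := by
  rw [X, X, X, X, X, monomial_mul, monomial_mul, monomial_mul, monomial_mul, hv]; norm_num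

theorem sum_fin3_bool {M : Type*} [AddCommMonoid M] (F : (Fin 3 → Bool) → M) :
    ∑ u, F u = F ![true,true,true] + (F ![true,true,false] + (F ![true,false,true]
      + (F ![true,false,false] + (F ![false,true,true] + (F ![false,true,false]
      + (F ![false,false,true] + F ![false,false,false])))))) := by
  have h : (Finset.univ : Finset (Fin 3 → Bool)) =
    {![true,true,true], ![true,true,false], ![true,false,true], ![true,false,false],
     ![false,true,true], ![false,true,false], ![false,false,true], ![false,false,false]} := by
    decide
  rw [h]
  repeat rw [Finset.sum_insert (by decide)]
  rw [Finset.sum_singleton]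

/-- Every element of J_{C3} that is a K-linear combination of the eight monomials
u1·u2·u3 (u_i ∈ {x_i, y_i}) is a K-linear combination of x1x2x3 − y1x2y3 and
x1y2x3 − y1y2y3. -/
theorem JC3_multideg_one_one_one
    (f : MvPolynomial (Fin 4 ⊕ Fin 4) K)
    (hf : f ∈ JC3 K)
    (hmulti : f ∈ Submodule.span K (multidegOneOneOneMonomials K)) :
    f ∈ Submodule.span K
      ({x K 0 * x K 1 * x K 2 - y K 0 * x K 1 * y K 2,
        x K 0 * y K 1 * x K 2 - y K 0 * y K 1 * y K 2} :
        Set (MvPolynomial (Fin 4 ⊕ Fin 4) K)) := by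
  classical
  -- express f as a linear combination of the eight monomials
  have hrange : multidegOneOneOneMonomials K = Set.range (g K) :=
    Set.ext fun m => exists_congr fun u => eq_comm
  rw [hrange] at hmulti
  obtain ⟨c, hc⟩ := (Submodule.mem_span_range_iff_exists_fun K).mp hmulti
  -- phi kills f
  have hphi : phi K f = 0 := by
    have hsub : JC3 K ≤ RingHom.ker (phi K).toRingHom := by
      rw [JC3, Ideal.span_le]
      intro p hp
      simp only [Set.mem_insert_iff, Set.mem_singleton_iff] at hp
      rcases hp with h|h|h <;> subst h <;>
        · simp only [SetLike.mem_coe, RingHom.mem_ker, AlgHom.toRingHom_eq_coe,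
            RingHom.coe_coe, map_sub, map_mul, phi, x, y, aeval_X, Sum.elim_inl, Sum.elim_inr,
            Matrix.cons_val_zero, Matrix.cons_val_one, Matrix.head_cons,
            Matrix.cons_val_two, Matrix.tail_cons, Matrix.cons_val_three]
          ring
    exact hsub hf
  -- compute the images of the eight monomials under phi
  have P1 : phi K (g K ![true,true,true]) = monomial (ee ![1,1,1,1,1,0]) (1:K) := by
    simp [g, Fin.prod_univ_three, phi, x, y, show ((2:Fin 3).castSucc) = (2:Fin 4) from rfl]
    exact prod5' K 0 1 4 2 3 _ (by ext k; fin_cases k <;> simp [ee] <;> rfl)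
  have P2 : phi K (g K ![true,true,false]) = monomial (ee ![1,2,1,0,1,0]) (1:K) := by
    simp [g, Fin.prod_univ_three, phi, x, y, show ((2:Fin 3).castSucc) = (2:Fin 4) from rfl]
    exact prod5' K 0 1 4 2 1 _ (by ext k; fin_cases k <;> simp [ee] <;> rfl)
  have P3 : phi K (g K ![true,false,true]) = monomial (ee ![1,1,1,1,0,1]) (1:K) := by
    simp [g, Fin.prod_univ_three, phi, x, y, show ((2:Fin 3).castSucc) = (2:Fin 4) from rfl]
    exact prod5' K 0 1 5 2 3 _ (by ext k; fin_cases k <;> simp [ee] <;> rfl)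
  have P4 : phi K (g K ![true,false,false]) = monomial (ee ![1,2,1,0,0,1]) (1:K) := by
    simp [g, Fin.prod_univ_three, phi, x, y, show ((2:Fin 3).castSucc) = (2:Fin 4) from rfl]
    exact prod5' K 0 1 5 2 1 _ (by ext k; fin_cases k <;> simp [ee] <;> rfl)
  have P5 : phi K (g K ![false,true,true]) = monomial (ee ![1,0,1,2,1,0]) (1:K) := by
    simp [g, Fin.prod_univ_three, phi, x, y, show ((2:Fin 3).castSucc) = (2:Fin 4) from rfl]
    exact prod5' K 0 3 4 2 3 _ (by ext k; fin_cases k <;> simp [ee] <;> rfl)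
  have P6 : phi K (g K ![false,true,false]) = monomial (ee ![1,1,1,1,1,0]) (1:K) := by
    simp [g, Fin.prod_univ_three, phi, x, y, show ((2:Fin 3).castSucc) = (2:Fin 4) from rfl]
    exact prod5' K 0 3 4 2 1 _ (by ext k; fin_cases k <;> simp [ee] <;> rfl)
  have P7 : phi K (g K ![false,false,true]) = monomial (ee ![1,0,1,2,0,1]) (1:K) := by
    simp [g, Fin.prod_univ_three, phi, x, y, show ((2:Fin 3).castSucc) = (2:Fin 4) from rfl]
    exact prod5' K 0 3 5 2 3 _ (by ext k; fin_cases k <;> simp [ee] <;> rfl)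
  have P8 : phi K (g K ![false,false,false]) = monomial (ee ![1,1,1,1,0,1]) (1:K) := by
    simp [g, Fin.prod_univ_three, phi, x, y, show ((2:Fin 3).castSucc) = (2:Fin 4) from rfl]
    exact prod5' K 0 3 5 2 1 _ (by ext k; fin_cases k <;> simp [ee] <;> rfl)
  -- the linear relation among the coefficients
  have h0 : (∑ u : Fin 3 → Bool, c u • phi K (g K u)) = 0 := by
    have h := congrArg (phi K) hc
    rw [map_sum] at h
    simp only [map_smul] at h
    rw [hphi] at h
    exact h
  rw [sum_fin3_bool] at h0
  rw [P1, P2, P3, P4, P5, P6, P7, P8] at h0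
  -- extract the six coefficient equations
  have q1 : c ![true,true,true] + c ![false,true,false] = 0 := by
    have hcc := congrArg (coeff (ee ![1,1,1,1,1,0])) h0
    simp only [coeff_add, coeff_smul, coeff_monomial, coeff_zero, ee_inj] at hcc
    simp (config := { decide := true }) at hcc
    linear_combination hcc
  have q2 : c ![true,true,false] = 0 := by
    have hcc := congrArg (coeff (ee ![1,2,1,0,1,0])) h0
    simp only [coeff_add, coeff_smul, coeff_monomial, coeff_zero, ee_inj] at hcc
    simp (config := { decide := true }) at hcc
    linear_combination hcc
  have q3 : c ![true,false,true] + c ![false,false,false] = 0 := by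
    have hcc := congrArg (coeff (ee ![1,1,1,1,0,1])) h0
    simp only [coeff_add, coeff_smul, coeff_monomial, coeff_zero, ee_inj] at hcc
    simp (config := { decide := true }) at hcc
    linear_combination hcc
  have q4 : c ![true,false,false] = 0 := by
    have hcc := congrArg (coeff (ee ![1,2,1,0,0,1])) h0
    simp only [coeff_add, coeff_smul, coeff_monomial, coeff_zero, ee_inj] at hcc
    simp (config := { decide := true }) at hcc
    linear_combination hcc
  have q5 : c ![false,true,true] = 0 := by
    have hcc := congrArg (coeff (ee ![1,0,1,2,1,0])) h0
    simp only [coeff_add, coeff_smul, coeff_monomial, coeff_zero, ee_inj] at hcc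
    simp (config := { decide := true }) at hcc
    linear_combination hcc
  have q6 : c ![false,false,true] = 0 := by
    have hcc := congrArg (coeff (ee ![1,0,1,2,0,1])) h0
    simp only [coeff_add, coeff_smul, coeff_monomial, coeff_zero, ee_inj] at hcc
    simp (config := { decide := true }) at hcc
    linear_combination hcc
  -- explicit form of the eight monomials
  have G1 : g K ![true,true,true] = x K 0 * x K 1 * x K 2 := by
    simp [g, Fin.prod_univ_three, show ((2:Fin 3).castSucc) = (2:Fin 4) from rfl]
  have G2 : g K ![true,true,false] = x K 0 * x K 1 * y K 2 := by
    simp [g, Fin.prod_univ_three, show ((2:Fin 3).castSucc) = (2:Fin 4) from rfl]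
  have G3 : g K ![true,false,true] = x K 0 * y K 1 * x K 2 := by
    simp [g, Fin.prod_univ_three, show ((2:Fin 3).castSucc) = (2:Fin 4) from rfl]
  have G4 : g K ![true,false,false] = x K 0 * y K 1 * y K 2 := by
    simp [g, Fin.prod_univ_three, show ((2:Fin 3).castSucc) = (2:Fin 4) from rfl]
  have G5 : g K ![false,true,true] = y K 0 * x K 1 * x K 2 := by
    simp [g, Fin.prod_univ_three, show ((2:Fin 3).castSucc) = (2:Fin 4) from rfl]
  have G6 : g K ![false,true,false] = y K 0 * x K 1 * y K 2 := by
    simp [g, Fin.prod_univ_three, show ((2:Fin 3).castSucc) = (2:Fin 4) from rfl]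
  have G7 : g K ![false,false,true] = y K 0 * y K 1 * x K 2 := by
    simp [g, Fin.prod_univ_three, show ((2:Fin 3).castSucc) = (2:Fin 4) from rfl]
  have G8 : g K ![false,false,false] = y K 0 * y K 1 * y K 2 := by
    simp [g, Fin.prod_univ_three, show ((2:Fin 3).castSucc) = (2:Fin 4) from rfl]
  -- conclude
  have h6' : c ![false,true,false] = -c ![true,true,true] := by linear_combination q1
  have h8' : c ![false,false,false] = -c ![true,false,true] := by linear_combination q3
  have key : f = c ![true,true,true] • (x K 0 * x K 1 * x K 2 - y K 0 * x K 1 * y K 2)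
      + c ![true,false,true] • (x K 0 * y K 1 * x K 2 - y K 0 * y K 1 * y K 2) := by
    rw [← hc, sum_fin3_bool]
    rw [G1, G2, G3, G4, G5, G6, G7, G8, q2, q4, q5, q6, h6', h8']
    module
  rw [key]
  exact Submodule.add_mem _
    (Submodule.smul_mem _ _ (Submodule.subset_span (Set.mem_insert _ _)))
    (Submodule.smul_mem _ _ (Submodule.subset_span (Set.mem_insert_of_mem _ rfl)))

end
end

section
/- Let G be a finite simple bipartite graph on vertex set {1,…,n} with bipartition V1 ⊔ V2, and let σ be the K-algebra automorphism of K[x1,…,xn,y1,…,yn] determined by σ(xi) = yi and σ(yi) = xi for all i ∈ V1, while σ fixes xi and yi for all i ∈ V2. Then σ maps the binomial edge ideal I_G = (xi·yj − xj·yi : {i,j} ∈ E(G)) onto the parity binomial edge ideal J_G, i.e., σ(I_G) = J_G. -/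
/- The polynomial ring K[x1,…,xn,y1,…,yn] is modelled as `MvPolynomial (Fin n ⊕ Fin n) K`,
where `X (Sum.inl i)` stands for x_i and `X (Sum.inr i)` stands for y_i. -/

open MvPolynomial

noncomputable section

/-- The parity binomial edge ideal of a finite simple graph `G` on vertex set `Fin n`. -/
noncomputable def parityBinomialEdgeIdeal (K : Type*) [Field K] {n : ℕ}
    (G : SimpleGraph (Fin n)) : Ideal (MvPolynomial (Fin n ⊕ Fin n) K) :=
  Ideal.span {p | ∃ i j, G.Adj i j ∧
    p = X (Sum.inl i) * X (Sum.inl j) - X (Sum.inr i) * X (Sum.inr j)}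

/-- The binomial edge ideal of a finite simple graph `G` on vertex set `Fin n`. -/
noncomputable def binomialEdgeIdeal (K : Type*) [Field K] {n : ℕ}
    (G : SimpleGraph (Fin n)) : Ideal (MvPolynomial (Fin n ⊕ Fin n) K) :=
  Ideal.span {p | ∃ i j, G.Adj i j ∧
    p = X (Sum.inl i) * X (Sum.inr j) - X (Sum.inl j) * X (Sum.inr i)}

/-- The map on variables exchanging x_i and y_i for i ∈ V1 and fixing all other
variables. -/
def swapVars {n : ℕ} (V1 : Finset (Fin n)) : (Fin n ⊕ Fin n) → (Fin n ⊕ Fin n)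
  | Sum.inl i => if i ∈ V1 then Sum.inr i else Sum.inl i
  | Sum.inr i => if i ∈ V1 then Sum.inl i else Sum.inr i

/-- Let G be bipartite with bipartition V1 ⊔ V2, and let σ be the K-algebra
automorphism of K[x1,…,xn,y1,…,yn] exchanging x_i and y_i for all i ∈ V1 and fixing
the remaining variables. Then σ maps the binomial edge ideal I_G onto the parity
binomial edge ideal J_G. -/
theorem rename_binomialEdgeIdeal_eq_parityBinomialEdgeIdeal
    (K : Type*) [Field K] {n : ℕ} (G : SimpleGraph (Fin n))
    (V1 V2 : Finset (Fin n)) (hdisj : Disjoint V1 V2) (hcover : V1 ∪ V2 = Finset.univ)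
    (hbip : ∀ i j, G.Adj i j → (i ∈ V1 ∧ j ∈ V2) ∨ (i ∈ V2 ∧ j ∈ V1)) :
    Ideal.map (rename (R := K) (swapVars V1)) (binomialEdgeIdeal K G) =
      parityBinomialEdgeIdeal K G := by
  classical
  have hnot : ∀ i ∈ V2, i ∉ V1 := fun i hi hi' => (Finset.disjoint_left.mp hdisj) hi' hi
  rw [binomialEdgeIdeal, parityBinomialEdgeIdeal, Ideal.map_span]
  apply le_antisymm
  · rw [Ideal.span_le]
    rintro _ ⟨p, ⟨i, j, hij, rfl⟩, rfl⟩
    have h := hbip i j hij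
    simp only [map_sub, map_mul, rename_X, swapVars]
    rcases h with ⟨hi, hj⟩ | ⟨hi, hj⟩
    · rw [if_pos hi, if_pos hi, if_neg (hnot j hj), if_neg (hnot j hj)]
      have : X (Sum.inr i) * X (Sum.inr j) - X (Sum.inl j) * X (Sum.inl i)
          = -(X (R := K) (Sum.inl i) * X (Sum.inl j) - X (Sum.inr i) * X (Sum.inr j)) := by
        ring
      rw [this]
      exact neg_mem (Ideal.subset_span ⟨i, j, hij, rfl⟩)
    · rw [if_neg (hnot i hi), if_neg (hnot i hi), if_pos hj, if_pos hj]
      have : X (Sum.inl i) * X (Sum.inl j) - X (Sum.inr j) * X (Sum.inr i)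
          = X (R := K) (Sum.inl i) * X (Sum.inl j) - X (Sum.inr i) * X (Sum.inr j) := by
        ring
      rw [this]
      exact Ideal.subset_span ⟨i, j, hij, rfl⟩
  · rw [Ideal.span_le]
    rintro _ ⟨i, j, hij, rfl⟩
    have h := hbip i j hij
    rcases h with ⟨hi, hj⟩ | ⟨hi, hj⟩
    · have : X (R := K) (Sum.inl i) * X (Sum.inl j) - X (Sum.inr i) * X (Sum.inr j)
          = -(rename (swapVars V1)
              (X (R := K) (Sum.inl i) * X (Sum.inr j) - X (Sum.inl j) * X (Sum.inr i))) := by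
        simp only [map_sub, map_mul, rename_X, swapVars]
        rw [if_pos hi, if_pos hi, if_neg (hnot j hj), if_neg (hnot j hj)]
        ring
      rw [this]
      exact neg_mem (Ideal.subset_span ⟨_, ⟨i, j, hij, rfl⟩, rfl⟩)
    · have : X (R := K) (Sum.inl i) * X (Sum.inl j) - X (Sum.inr i) * X (Sum.inr j)
          = rename (swapVars V1)
              (X (R := K) (Sum.inl i) * X (Sum.inr j) - X (Sum.inl j) * X (Sum.inr i)) := by
        simp only [map_sub, map_mul, rename_X, swapVars]
        rw [if_neg (hnot i hi), if_neg (hnot i hi), if_pos hj, if_pos hj]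
        ring
      rw [this]
      exact Ideal.subset_span ⟨_, ⟨i, j, hij, rfl⟩, rfl⟩

end
end
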